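/- Ganea–Schwarz-type characterization of dTC_m: for a path-connected metric space X and m ≥ 2, dTC_m(X) ≤ n if and only if the fibration B_{n+1}(π_m) : P(X)_{n+1}(π_m) → X^m admits a continuous section. Consequently, dTC_m(X) = dsecat(π_m). -/

import Mathlib

open MeasureTheory unitInterval

noncomputable section

/-- The path space `P(X) = C([0,1], X)` with the compact-open topology. -/
abbrev PathSp (X : Type*) [TopologicalSpace X] : Type _ := C(unitInterval, X)

/-- The space `B_n(Z)` of probability measures on a metric space `Z` supported on at most
`n` points, as a subspace of the space of probability measures with the Lévy–Prokhorov metric. -/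
def Bmeas (n : ℕ) (Z : Type*) [MetricSpace Z] : Type _ :=
  letI : MeasurableSpace Z := borel Z
  {μ : LevyProkhorov (ProbabilityMeasure Z) //
    ∃ S : Finset Z, S.card ≤ n ∧ (LevyProkhorov.toMeasureEquiv μ : ProbabilityMeasure Z) (↑S : Set Z) = 1}

noncomputable instance (n : ℕ) (Z : Type*) [MetricSpace Z] : TopologicalSpace (Bmeas n Z) :=
  letI : MeasurableSpace Z := borel Z
  haveI : BorelSpace Z := ⟨rfl⟩
  instTopologicalSpaceSubtype

/-- The underlying probability measure of an element of `B_n(Z)`. -/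
def Bmeas.meas {n : ℕ} {Z : Type*} [MetricSpace Z] (μ : Bmeas n Z) :
    @ProbabilityMeasure Z (borel Z) :=
  LevyProkhorov.toMeasureEquiv μ.1

/-- `μ ∈ B_n(Z)` is supported on the set `A`. -/
def DistributedOn {Z : Type*} [MetricSpace Z] {n : ℕ} (μ : Bmeas n Z) (A : Set Z) : Prop :=
  ∃ S : Finset Z, (↑S : Set Z) ⊆ A ∧ Bmeas.meas μ (↑S : Set Z) = 1

/-- The time points `t_j = j/(m-1)`, `j = 0, …, m-1`, in `[0,1]`. -/
def tpt (m : ℕ) (j : Fin m) : unitInterval :=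
  Set.projIcc 0 1 zero_le_one ((j : ℝ) / ((m : ℝ) - 1))

/-- A `k`-distributed `m`-navigation algorithm on `X`. -/
def IsNavAlg (m k : ℕ) {X : Type*} [MetricSpace X]
    (s : (Fin m → X) → Bmeas k (PathSp X)) : Prop :=
  Continuous s ∧ ∀ x : Fin m → X,
    DistributedOn (s x) {φ : PathSp X | ∀ j : Fin m, φ (tpt m j) = x j}

/-- The `m`-th sequential distributional topological complexity. -/
noncomputable def dTC (m : ℕ) (X : Type*) [MetricSpace X] : ℕ∞ :=
  sInf {c : ℕ∞ | ∃ k : ℕ, c = k ∧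
    ∃ s : (Fin m → X) → Bmeas (k + 1) (PathSp X), IsNavAlg m (k + 1) s}

/-- A `k`-contraction of `Y` to the point `y₀`. -/
def IsContr (k : ℕ) {Y : Type*} [MetricSpace Y] (y₀ : Y)
    (H : Y → Bmeas k (PathSp Y)) : Prop :=
  Continuous H ∧ ∀ y : Y,
    DistributedOn (H y) {φ : PathSp Y | φ 0 = y ∧ φ 1 = y₀}

/-- The distributional Lusternik–Schnirelmann category. -/
noncomputable def dcat (Y : Type*) [MetricSpace Y] : ℕ∞ :=
  sInf {c : ℕ∞ | ∃ k : ℕ, c = k ∧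
    ∃ (y₀ : Y) (H : Y → Bmeas (k + 1) (PathSp Y)), IsContr (k + 1) y₀ H}

/-- The classical `m`-th sequential topological complexity. -/
noncomputable def TCcl (m : ℕ) (X : Type*) [TopologicalSpace X] : ℕ∞ :=
  sInf {c : ℕ∞ | ∃ k : ℕ, c = k ∧
    ∃ (U : Fin (k + 1) → Set (Fin m → X)) (s : ∀ i : Fin (k + 1), C(U i, PathSp X)),
      (∀ i, IsOpen (U i)) ∧ (∀ x, ∃ i, x ∈ U i) ∧
      ∀ (i : Fin (k + 1)) (x : U i) (j : Fin m), (s i x) (tpt m j) = (x : Fin m → X) j}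

/-- The homotopy lifting property with respect to all spaces (Hurewicz fibration). -/
def IsHurFib {E B : Type*} [TopologicalSpace E] [TopologicalSpace B] (p : E → B) : Prop :=
  ∀ (Z : Type) [TopologicalSpace Z] (f : C(Z, E)) (H : C(Z × unitInterval, B)),
    (∀ z, H (z, 0) = p (f z)) →
      ∃ G : C(Z × unitInterval, E),
        (∀ z t, p (G (z, t)) = H (z, t)) ∧ ∀ z, G (z, 0) = f z

/-- `E_k(p)`: the space of probability measures supported on at most `k` points of a
single fiber of `p`, as a subspace of `B_k(E)`. -/
def FibMeas (k : ℕ) {E B : Type*} [MetricSpace E] (p : E → B) : Type _ :=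
  {μ : Bmeas k E // ∃ b : B, DistributedOn μ (p ⁻¹' {b})}

instance (k : ℕ) {E B : Type*} [MetricSpace E] (p : E → B) :
    TopologicalSpace (FibMeas k p) := instTopologicalSpaceSubtype

/-- The map `B_k(p) : E_k(p) → B` sending a fiberwise supported measure to its base point. -/
noncomputable def fibProj (k : ℕ) {E B : Type*} [MetricSpace E] (p : E → B)
    (μ : FibMeas k p) : B :=
  Classical.choose μ.2

/-- The distributional sectional category of a map `p : E → B`. -/
noncomputable def dsecat {E B : Type*} [MetricSpace E] [MetricSpace B] (p : E → B) : ℕ∞ :=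
  sInf {c : ℕ∞ | ∃ k : ℕ, c = k ∧
    ∃ s : B → FibMeas (k + 1) p, Continuous s ∧ ∀ b, fibProj (k + 1) p (s b) = b}

/-- The fibration `π_m : P(X) → X^m`, `φ ↦ (φ(t_1), …, φ(t_m))`. -/
def piFib (m : ℕ) (X : Type*) [TopologicalSpace X] (φ : PathSp X) : Fin m → X :=
  fun j => φ (tpt m j)

/-!
A navigation algorithm assigns to `x ∈ X^m` a measure on paths through `x` at the times `t_j`,
i.e. a measure supported in the fibre `π_m⁻¹(x)`; since a finitely supported probability measure
cannot live on two disjoint fibres, such an assignment is the same as a section of `B_k(π_m)`.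
Hence `dTC_m(X)` and `dsecat(π_m)` are infima over the same set of `k`, and the characterization
of `dTC_m(X) ≤ n` uses that having a `k`-distributed algorithm is monotone in `k`.
-/

section Support

variable {Z : Type*} [MetricSpace Z]

theorem DistributedOn.inter_nonempty {n : ℕ} {μ : Bmeas n Z} {A B : Set Z}
    (hA : DistributedOn μ A) (hB : DistributedOn μ B) : (A ∩ B).Nonempty := by
  let : MeasurableSpace Z := borel Z
  have : BorelSpace Z := ⟨rfl⟩
  have toMeasure : ∀ S : Set Z, Bmeas.meas μ S = 1 → (Bmeas.meas μ : Measure Z) S = 1 :=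
    fun S hS => by rw [← ProbabilityMeasure.ennreal_coeFn_eq_coeFn_toMeasure, hS, ENNReal.coe_one]
  obtain ⟨S, hSA, hS⟩ := hA
  obtain ⟨T, hTB, hT⟩ := hB
  have hSc : (Bmeas.meas μ : Measure Z) (↑S : Set Z)ᶜ = 0 :=
    (prob_compl_eq_zero_iff S.finite_toSet.measurableSet).2 (toMeasure _ hS)
  have hTS : (Bmeas.meas μ : Measure Z) ((↑T : Set Z) ∩ ↑S) ≠ 0 := by
    rw [measure_inter_conull hSc, toMeasure _ hT]
    exact one_ne_zero
  obtain ⟨z, hzT, hzS⟩ := nonempty_of_measure_ne_zero hTS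
  exact ⟨z, hSA hzS, hTB hzT⟩

def Bmeas.castLE {k n : ℕ} (h : k ≤ n) (μ : Bmeas k Z) : Bmeas n Z :=
  ⟨μ.1, μ.2.imp fun _ hS => ⟨hS.1.trans h, hS.2⟩⟩

theorem Bmeas.continuous_castLE {k n : ℕ} (h : k ≤ n) :
    Continuous (Bmeas.castLE h : Bmeas k Z → Bmeas n Z) :=
  letI : MeasurableSpace Z := borel Z
  haveI : BorelSpace Z := ⟨rfl⟩
  continuous_subtype_val.subtype_mk _

end Support

theorem IsNavAlg.castLE {m k n : ℕ} {X : Type*} [MetricSpace X]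
    {s : (Fin m → X) → Bmeas k (PathSp X)} (hs : IsNavAlg m k s) (h : k ≤ n) :
    IsNavAlg m n (Bmeas.castLE h ∘ s) :=
  ⟨(Bmeas.continuous_castLE h).comp hs.1, hs.2⟩

section Fiber

variable {k : ℕ} {E B : Type*} [MetricSpace E] (p : E → B)

theorem fibProj_spec (μ : FibMeas k p) : DistributedOn μ.1 (p ⁻¹' {fibProj k p μ}) :=
  Classical.choose_spec μ.2

/-- Distinct fibres are disjoint, so the base point does not depend on the choice made by
`fibProj`. -/
theorem fibProj_eq_of_distributedOn {μ : FibMeas k p} {b : B}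
    (h : DistributedOn μ.1 (p ⁻¹' {b})) : fibProj k p μ = b := by
  obtain ⟨e, he, he'⟩ := (fibProj_spec p μ).inter_nonempty h
  rw [← he, ← he']

end Fiber

theorem preimage_piFib (m : ℕ) (X : Type*) [TopologicalSpace X] (x : Fin m → X) :
    piFib m X ⁻¹' {x} = {φ : PathSp X | ∀ j, φ (tpt m j) = x j} := by
  ext φ
  simp [piFib, funext_iff]

theorem exists_isNavAlg_iff_exists_section (m n : ℕ) (X : Type*) [MetricSpace X] :
    (∃ s : (Fin m → X) → Bmeas n (PathSp X), IsNavAlg m n s) ↔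
      ∃ s : (Fin m → X) → FibMeas n (piFib m X),
        Continuous s ∧ ∀ x, fibProj n (piFib m X) (s x) = x := by
  constructor
  · rintro ⟨s, hs_cont, hs_dist⟩
    have hs_fib : ∀ x, DistributedOn (s x) (piFib m X ⁻¹' {x}) := fun x => by
      rw [preimage_piFib]
      exact hs_dist x
    exact ⟨fun x => ⟨s x, x, hs_fib x⟩, hs_cont.subtype_mk _,
      fun x => fibProj_eq_of_distributedOn _ (hs_fib x)⟩
  · rintro ⟨s, hs_cont, hs_proj⟩
    refine ⟨fun x => (s x).1, continuous_subtype_val.comp hs_cont, fun x => ?_⟩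
    have hs_fib := fibProj_spec (piFib m X) (s x)
    rwa [hs_proj x, preimage_piFib] at hs_fib

theorem sInf_natCast_le_iff_of_monotone {P : ℕ → Prop} (hP : Monotone P) (n : ℕ) :
    sInf {c : ℕ∞ | ∃ k : ℕ, c = k ∧ P k} ≤ n ↔ P n := by
  refine ⟨fun h => ?_, fun hn => sInf_le ⟨n, rfl, hn⟩⟩
  have hne : {c : ℕ∞ | ∃ k : ℕ, c = k ∧ P k}.Nonempty := by
    by_contra hempty
    rw [Set.not_nonempty_iff_eq_empty.1 hempty, sInf_empty] at h
    exact ENat.natCast_ne_top n (top_le_iff.1 h)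
  obtain ⟨k, hk, hPk⟩ := csInf_mem hne
  rw [hk, Nat.cast_le] at h
  exact hP h hPk

theorem dTC_eq_dsecat_general (m : ℕ) (X : Type) [MetricSpace X] :
    (∀ n : ℕ,
      dTC m X ≤ (n : ℕ∞) ↔
        ∃ s : (Fin m → X) → FibMeas (n + 1) (piFib m X),
          Continuous s ∧ ∀ x, fibProj (n + 1) (piFib m X) (s x) = x) ∧
    dTC m X = dsecat (piFib m X) := by
  have hmono : Monotone fun k => ∃ s : (Fin m → X) → Bmeas (k + 1) (PathSp X),
      IsNavAlg m (k + 1) s :=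
    fun _ _ hkl ⟨_, hs⟩ => ⟨_, hs.castLE (Nat.succ_le_succ hkl)⟩
  refine ⟨fun n => ?_, ?_⟩
  · rw [dTC, sInf_natCast_le_iff_of_monotone hmono, exists_isNavAlg_iff_exists_section]
  · simp only [dTC, dsecat, exists_isNavAlg_iff_exists_section]

/-- Ganea–Schwarz-type characterization of `dTC_m`: `dTC_m(X) ≤ n` iff the fibration
`B_{n+1}(π_m) : P(X)_{n+1}(π_m) → X^m` admits a continuous section; consequently
`dTC_m(X) = dsecat(π_m)`. -/
theorem dTC_eq_dsecat (m : ℕ) (hm : 2 ≤ m) (X : Type) [MetricSpace X]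
    [PathConnectedSpace X] :
    (∀ n : ℕ,
      dTC m X ≤ (n : ℕ∞) ↔
        ∃ s : (Fin m → X) → FibMeas (n + 1) (piFib m X),
          Continuous s ∧ ∀ x, fibProj (n + 1) (piFib m X) (s x) = x) ∧
    dTC m X = dsecat (piFib m X) :=
  dTC_eq_dsecat_general m X
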